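/- Let ℓ be an odd prime, α the order-3 automorphism of V = (Z/ℓ)² given by the matrix [[0,−1],[1,−1]], and v₂, v₃ ∈ V with w := (v₂ − v₃)^{(1 − α⁻¹)} (i.e. w = (v₂−v₃) − α⁻¹(v₂−v₃)). If there exist k₂, k₃ ∈ Z/ℓ with v₂ + k₂w = 0 and v₃ + k₃w = 0, then v₂ − v₃ is an eigenvector of α and ⟨v₂, v₃⟩ = ⟨v₂ − v₃⟩; in particular v₂ does not generate V together with its α-orbit (v₂ is not an α-generator). -/

import Mathlib

/-- The order-3 automorphism `α = [[0,-1],[1,-1]]` of `V = (ZMod ℓ)²`. -/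
def alphaMap (ℓ : ℕ) (v : ZMod ℓ × ZMod ℓ) : ZMod ℓ × ZMod ℓ :=
  (-v.2, v.1 - v.2)

/-- The inverse `α⁻¹ = α² = [[-1,1],[-1,0]]` of `α`. -/
def alphaInv (ℓ : ℕ) (v : ZMod ℓ × ZMod ℓ) : ZMod ℓ × ZMod ℓ :=
  (v.2 - v.1, -v.1)

lemma span_single_ne_top (ℓ : ℕ) [Fact ℓ.Prime] (u : ZMod ℓ × ZMod ℓ) :
    Submodule.span (ZMod ℓ) ({u} : Set (ZMod ℓ × ZMod ℓ)) ≠ ⊤ := by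
  intro h
  have h1 : ((1 : ZMod ℓ), (0 : ZMod ℓ)) ∈ Submodule.span (ZMod ℓ) ({u} : Set (ZMod ℓ × ZMod ℓ)) := by
    rw [h]; trivial
  have h2 : ((0 : ZMod ℓ), (1 : ZMod ℓ)) ∈ Submodule.span (ZMod ℓ) ({u} : Set (ZMod ℓ × ZMod ℓ)) := by
    rw [h]; trivial
  rw [Submodule.mem_span_singleton] at h1 h2
  obtain ⟨p, hp⟩ := h1
  obtain ⟨q, hq⟩ := h2
  rw [Prod.ext_iff] at hp hq
  obtain ⟨hp1, hp2⟩ := hp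
  obtain ⟨hq1, hq2⟩ := hq
  simp only [Prod.smul_fst, Prod.smul_snd, smul_eq_mul] at hp1 hp2 hq1 hq2
  have : (1 : ZMod ℓ) = 0 := by
    calc (1 : ZMod ℓ) = (p * u.1) * (q * u.2) := by rw [hp1, hq2]; ring
    _ = (p * u.2) * (q * u.1) := by ring
    _ = 0 := by rw [hp2]; ring
  exact one_ne_zero this

/-- If `w = (v₂-v₃) - α⁻¹(v₂-v₃)` and both `v₂` and `v₃` are `(Z/ℓ)`-multiples of
`-w`, then `v₂-v₃` is an eigenvector of `α`, `⟨v₂,v₃⟩ = ⟨v₂-v₃⟩`, and `v₂` is not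
an `α`-generator (i.e. `v₂` and `α v₂` do not span `V`). -/
theorem stmt16 (ℓ : ℕ) (hℓ : ℓ.Prime) (hodd : Odd ℓ)
    (v₂ v₃ : ZMod ℓ × ZMod ℓ)
    (hk : ∃ k₂ k₃ : ZMod ℓ,
      v₂ + k₂ • ((v₂ - v₃) - alphaInv ℓ (v₂ - v₃)) = 0 ∧
      v₃ + k₃ • ((v₂ - v₃) - alphaInv ℓ (v₂ - v₃)) = 0) :
    (∃ c : ZMod ℓ, alphaMap ℓ (v₂ - v₃) = c • (v₂ - v₃)) ∧
      Submodule.span (ZMod ℓ) ({v₂, v₃} : Set (ZMod ℓ × ZMod ℓ)) =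
        Submodule.span (ZMod ℓ) ({v₂ - v₃} : Set (ZMod ℓ × ZMod ℓ)) ∧
      Submodule.span (ZMod ℓ) ({v₂, alphaMap ℓ v₂} : Set (ZMod ℓ × ZMod ℓ)) ≠ ⊤ := by
  haveI := Fact.mk hℓ
  obtain ⟨k₂, k₃, h2, h3⟩ := hk
  obtain ⟨a, b⟩ := v₂
  obtain ⟨c, e⟩ := v₃
  rw [Prod.ext_iff] at h2 h3
  simp only [alphaInv, Prod.fst_sub, Prod.snd_sub, Prod.smul_fst, Prod.smul_snd,
    Prod.fst_add, Prod.snd_add, smul_eq_mul, Prod.fst_zero, Prod.snd_zero] at h2 h3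
  obtain ⟨ea, eb⟩ := h2
  obtain ⟨ec, ee⟩ := h3
  have hkey : (a - c)^2 - (a - c)*(b - e) + (b - e)^2 = 0 := by
    linear_combination (a - c + b - e) * ea - (a - c + b - e) * ec
      - (2*(a-c) - (b-e)) * eb + (2*(a-c) - (b-e)) * ee
  by_cases hy : b - e = 0
  · -- then everything is zero
    have hx : a - c = 0 := by
      have : (a - c)^2 = 0 := by linear_combination hkey + (a-c-(b-e))*hy
      exact pow_eq_zero_iff (by norm_num) |>.mp this
    have ha : a = 0 := by linear_combination ea - 2*k₂*hx + k₂*hy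
    have hb : b = 0 := by linear_combination eb - k₂*hx - k₂*hy
    have hc : c = 0 := by linear_combination ec - 2*k₃*hx + k₃*hy
    have he : e = 0 := by linear_combination ee - k₃*hx - k₃*hy
    subst ha hb hc he
    refine ⟨⟨0, by simp [alphaMap]⟩, ?_, ?_⟩
    · norm_num
    · have h0 : alphaMap ℓ ((0 : ZMod ℓ), (0 : ZMod ℓ)) = (0, 0) := by simp [alphaMap]
      rw [h0]
      simpa using span_single_ne_top ℓ ((0 : ZMod ℓ), (0 : ZMod ℓ))
  · -- b - e ≠ 0
    set x := a - c with hxdef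
    set y := b - e with hydef
    have hv2 : ((a, b) : ZMod ℓ × ZMod ℓ) = (-k₂ * (x + y) / y) • ((x, y) : ZMod ℓ × ZMod ℓ) := by
      rw [Prod.ext_iff]
      simp only [Prod.smul_fst, Prod.smul_snd, smul_eq_mul]
      constructor
      · field_simp
        linear_combination y * ea + k₂ * hkey
      · field_simp
        linear_combination eb
    have hv3 : ((c, e) : ZMod ℓ × ZMod ℓ) = (-k₃ * (x + y) / y) • ((x, y) : ZMod ℓ × ZMod ℓ) := by
      rw [Prod.ext_iff]
      simp only [Prod.smul_fst, Prod.smul_snd, smul_eq_mul]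
      constructor
      · field_simp
        linear_combination y * ec + k₃ * hkey
      · field_simp
        linear_combination ee
    have hdiff : ((a, b) : ZMod ℓ × ZMod ℓ) - (c, e) = (x, y) := by
      simp [Prod.ext_iff, hxdef, hydef]
    have heig : alphaMap ℓ ((x, y) : ZMod ℓ × ZMod ℓ)
        = ((x - y) / y) • ((x, y) : ZMod ℓ × ZMod ℓ) := by
      rw [Prod.ext_iff]
      simp only [alphaMap, Prod.smul_fst, Prod.smul_snd, smul_eq_mul]
      constructor
      · field_simp
        linear_combination -hkey
      · field_simp
    have hmemd : ∀ k : ZMod ℓ, k • ((x, y) : ZMod ℓ × ZMod ℓ) ∈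
        Submodule.span (ZMod ℓ) ({(x, y)} : Set (ZMod ℓ × ZMod ℓ)) := fun k =>
      Submodule.smul_mem _ k (Submodule.mem_span_singleton_self _)
    refine ⟨⟨(x - y) / y, by rw [hdiff]; exact heig⟩, ?_, ?_⟩
    · rw [hdiff]
      apply le_antisymm
      · rw [Submodule.span_le]
        intro u hu
        rcases hu with rfl | rfl
        · rw [hv2]; exact hmemd _
        · rw [hv3]; exact hmemd _
      · rw [Submodule.span_le, Set.singleton_subset_iff]
        have hxy : ((x, y) : ZMod ℓ × ZMod ℓ) = (1 : ZMod ℓ) • (a, b) + (-1 : ZMod ℓ) • (c, e) := by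
          simp only [Prod.smul_mk, smul_eq_mul, Prod.mk_add_mk, Prod.mk.injEq, hxdef, hydef]
          constructor <;> ring
        rw [hxy]
        exact Submodule.add_mem _
          (Submodule.smul_mem _ _ (Submodule.subset_span (by simp)))
          (Submodule.smul_mem _ _ (Submodule.subset_span (by simp)))
    · intro htop
      apply span_single_ne_top ℓ ((x, y) : ZMod ℓ × ZMod ℓ)
      rw [eq_top_iff, ← htop, Submodule.span_le]
      intro u hu
      rcases hu with rfl | rfl
      · rw [hv2]; exact hmemd _
      · have halpha : alphaMap ℓ ((a, b) : ZMod ℓ × ZMod ℓ)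
            = ((-k₂ * (x + y) / y) * ((x - y) / y)) • ((x, y) : ZMod ℓ × ZMod ℓ) := by
          rw [hv2]
          simp only [alphaMap, Prod.smul_fst, Prod.smul_snd, smul_eq_mul, Prod.ext_iff]
          constructor
          · field_simp
            linear_combination k₂ * (x + y) * hkey
          · field_simp
            ring
        rw [halpha]; exact hmemd _
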